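/- Let h: [0,∞) → [0,∞) be nondecreasing, let L, w ≥ 1, and let A be the L×(L+w̃−1) matrix with A_{i,j} = (1/w̃)·1{1 ≤ j−i+1 ≤ w̃}, and let B' be the L×L matrix with B'_{i,j} = (1/w̃)·1{|i−j| < w}, where w̃ = 2w−1. Consider the recursions y^{(ℓ)} = Aᵀ h(A h(y^{(ℓ-1)})) on R^{L+w̃−1} and z^{(ℓ)} = B' h(B' h(z^{(ℓ-1)})) on R^L, with initial conditions such that the center L entries of y^{(0)} dominate z^{(0)} componentwise and y^{(0)} ⪰ 0, z^{(0)} ⪰ 0. Writing y^{(ℓ)} = (y_t^{(ℓ)}, y_c^{(ℓ)}, y_b^{(ℓ)}) with top w−1, center L, and bottom w−1 entries, one has y_c^{(ℓ)} ⪰ z^{(ℓ)} componentwise for all ℓ ≥ 0. In particular, if y^{(ℓ)} → 0 then z^{(ℓ)} → 0. -/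

import Mathlib

/-!
All entries of `A` are nonnegative, so dropping its boundary columns can only decrease `A v` for
`v ⪰ 0`, and the central `L × L` block of `A` is exactly `B'`. Since `B'` is symmetric, the central
rows of `Aᵀ` are the rows of `B'` as well. As `h` is monotone on `[0, ∞)` and preserves
nonnegativity, each half-step of the two recursions preserves the domination `z ⪯ y_c`; the limit
statement then follows by squeezing.
-/

/-- `A i j = 1/w̃` iff `i ≤ j < i + w̃` (0-indexed), an `L × (L + w̃ − 1)` matrix. -/
noncomputable def bandMat (L wt : ℕ) : Matrix (Fin L) (Fin (L + wt - 1)) ℝ :=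
  fun i j => if (i : ℕ) ≤ j ∧ (j : ℕ) < i + wt then (1 : ℝ) / wt else 0

/-- `B' i j = 1/w̃` iff `|i − j| < w`, an `L × L` matrix, with `w̃ = 2w − 1`. -/
noncomputable def braidMat (L w : ℕ) : Matrix (Fin L) (Fin L) ℝ :=
  fun i j => if |(i : ℤ) - (j : ℤ)| < w then (1 : ℝ) / (2 * w - 1) else 0

open Matrix

section TwoLayerRecursion

variable {R : Type*} [Semiring R] [PartialOrder R] [IsOrderedRing R]

theorem Matrix.mulVec_nonneg_of_nonneg {m n : Type*} [Fintype n] {M : Matrix m n R}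
    (hM : ∀ i j, 0 ≤ M i j) {v : n → R} (hv : 0 ≤ v) : 0 ≤ M *ᵥ v :=
  fun i => Finset.sum_nonneg fun j _ => mul_nonneg (hM i j) (hv j)

theorem Matrix.submatrix_mulVec_le {m n m' n' : Type*} [Fintype n] [Fintype n']
    {M : Matrix m n R} (hM : ∀ i j, 0 ≤ M i j) (r : m' → m) (c : n' ↪ n) {u : n' → R}
    {v : n → R} (hv : 0 ≤ v) (huv : ∀ j, u j ≤ v (c j)) (i : m') :
    (M.submatrix r c *ᵥ u) i ≤ (M *ᵥ v) (r i) :=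
  calc ∑ j, M (r i) (c j) * u j
      ≤ ∑ j, M (r i) (c j) * v (c j) :=
        Finset.sum_le_sum fun j _ => mul_le_mul_of_nonneg_left (huv j) (hM _ _)
    _ = ∑ k ∈ Finset.univ.map c, M (r i) k * v k :=
        (Finset.sum_map _ c fun k => M (r i) k * v k).symm
    _ ≤ ∑ k, M (r i) k * v k :=
        Finset.sum_le_sum_of_subset_of_nonneg (Finset.subset_univ _)
          fun k _ _ => mul_nonneg (hM _ _) (hv k)

theorem Matrix.submatrix_mulVec_comp_le {m n m' n' : Type*} [Fintype n] [Fintype n']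
    {M : Matrix m n R} (hM : ∀ i j, 0 ≤ M i j) {h : R → R}
    (hmono : MonotoneOn h (Set.Ici 0)) (hnonneg : ∀ x, 0 ≤ x → 0 ≤ h x)
    (r : m' → m) (c : n' ↪ n) {u : n' → R} {v : n → R} (hu : 0 ≤ u) (hv : 0 ≤ v)
    (huv : ∀ j, u j ≤ v (c j)) (i : m') :
    (M.submatrix r c *ᵥ fun j => h (u j)) i ≤ (M *ᵥ fun j => h (v j)) (r i) :=
  submatrix_mulVec_le hM r c (fun j => hnonneg _ (hv j))
    (fun j => hmono (hu j) (hv (c j)) (huv j)) i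

theorem submatrix_le_of_two_layer_recursion {m n : Type*} [Fintype m] [Fintype n]
    {M : Matrix m n R} (hM : ∀ i j, 0 ≤ M i j) (e : m ↪ n)
    (hsymm : (M.submatrix id e)ᵀ = M.submatrix id e) {h : R → R}
    (hmono : MonotoneOn h (Set.Ici 0)) (hnonneg : ∀ x, 0 ≤ x → 0 ≤ h x)
    {y : ℕ → n → R} {z : ℕ → m → R}
    (hyrec : ∀ ℓ, y (ℓ + 1) = Mᵀ *ᵥ fun i => h ((M *ᵥ fun j => h (y ℓ j)) i))
    (hzrec : ∀ ℓ, z (ℓ + 1) = M.submatrix id e *ᵥ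
      fun i => h ((M.submatrix id e *ᵥ fun j => h (z ℓ j)) i))
    (hy0 : 0 ≤ y 0) (hz0 : 0 ≤ z 0) (hinit : ∀ i, z 0 i ≤ y 0 (e i)) (ℓ : ℕ) :
    (0 ≤ y ℓ ∧ 0 ≤ z ℓ) ∧ ∀ i, z ℓ i ≤ y ℓ (e i) := by
  induction ℓ with
  | zero => exact ⟨⟨hy0, hz0⟩, hinit⟩
  | succ ℓ ih =>
    obtain ⟨⟨hy, hz⟩, hzy⟩ := ih
    have hMe : ∀ i j, 0 ≤ M.submatrix id e i j := fun i j => hM _ _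
    have hv := mulVec_nonneg_of_nonneg hM fun j => hnonneg _ (hy j)
    have hu := mulVec_nonneg_of_nonneg hMe fun j => hnonneg _ (hz j)
    have huv := submatrix_mulVec_comp_le hM hmono hnonneg id e hz hy hzy
    refine ⟨⟨?_, ?_⟩, fun i => ?_⟩
    · rw [hyrec]
      exact mulVec_nonneg_of_nonneg (fun i j => hM j i) fun i => hnonneg _ (hv i)
    · rw [hzrec]
      exact mulVec_nonneg_of_nonneg hMe fun i => hnonneg _ (hu i)
    · rw [hyrec, hzrec]
      nth_rewrite 1 [← hsymm]
      rw [transpose_submatrix]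
      exact submatrix_mulVec_comp_le (fun i j => hM j i) hmono hnonneg e (.refl m)
        hu hv huv i

end TwoLayerRecursion

def centerEmb (L w : ℕ) (hw : 1 ≤ w) : Fin L ↪ Fin (L + (2 * w - 1) - 1) :=
  (Fin.natAddEmb (w - 1)).trans (Fin.castLEEmb (by omega))

theorem bandMat_nonneg (L wt : ℕ) (i : Fin L) (j : Fin (L + wt - 1)) :
    0 ≤ bandMat L wt i j := by
  unfold bandMat
  split <;> positivity

theorem bandMat_submatrix_centerEmb (L w : ℕ) (hw : 1 ≤ w) :
    (bandMat L (2 * w - 1)).submatrix id (centerEmb L w hw) = braidMat L w := by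
  ext i j
  have hwt : ((2 * w - 1 : ℕ) : ℝ) = 2 * w - 1 := by
    rw [Nat.cast_sub (by omega)]
    push_cast
    ring
  have hband : ((i : ℕ) ≤ w - 1 + j ∧ w - 1 + j < (i : ℕ) + (2 * w - 1)) ↔ |(i : ℤ) - j| < w := by
    rw [abs_lt]
    omega
  simp only [bandMat, braidMat, submatrix_apply, id, centerEmb, Function.Embedding.trans_apply,
    Fin.natAddEmb_apply, Fin.castLEEmb_apply, Fin.val_castLE, Fin.val_natAdd, hwt, hband]

theorem braidMat_transpose (L w : ℕ) : (braidMat L w)ᵀ = braidMat L w := by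
  ext i j
  simp only [transpose_apply, braidMat, abs_sub_comm (j : ℤ)]

theorem stmt_15 (L w : ℕ) (hw : 1 ≤ w)
    (h : ℝ → ℝ) (hmono : MonotoneOn h (Set.Ici 0)) (hnonneg : ∀ z : ℝ, 0 ≤ z → 0 ≤ h z)
    (y : ℕ → Fin (L + (2 * w - 1) - 1) → ℝ) (z : ℕ → Fin L → ℝ)
    (hyrec : ∀ ℓ : ℕ, y (ℓ + 1) = (bandMat L (2 * w - 1)).transpose.mulVec
      (fun i => h ((bandMat L (2 * w - 1)).mulVec (fun j => h (y ℓ j)) i)))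
    (hzrec : ∀ ℓ : ℕ, z (ℓ + 1) = (braidMat L w).mulVec
      (fun i => h ((braidMat L w).mulVec (fun j => h (z ℓ j)) i)))
    (hy0 : ∀ j, 0 ≤ y 0 j) (hz0 : ∀ i, 0 ≤ z 0 i)
    (hinit : ∀ i : Fin L,
      z 0 i ≤ y 0 ⟨w - 1 + i.val, by have := i.isLt; omega⟩) :
    (∀ ℓ : ℕ, ∀ i : Fin L,
      z ℓ i ≤ y ℓ ⟨w - 1 + i.val, by have := i.isLt; omega⟩) ∧
    ((∀ j, Filter.Tendsto (fun ℓ => y ℓ j) Filter.atTop (nhds 0)) →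
      ∀ i, Filter.Tendsto (fun ℓ => z ℓ i) Filter.atTop (nhds 0)) := by
  have hB := bandMat_submatrix_centerEmb L w hw
  have key := submatrix_le_of_two_layer_recursion (bandMat_nonneg L _) (centerEmb L w hw)
    (by rw [hB, braidMat_transpose]) hmono hnonneg hyrec (by rwa [hB]) hy0 hz0 hinit
  refine ⟨fun ℓ => (key ℓ).2, fun hy i => ?_⟩
  exact squeeze_zero (fun ℓ => (key ℓ).1.2 i) (fun ℓ => (key ℓ).2 i) (hy _)
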